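/- Let P be an n-polytope in ℝⁿ and let F be a complete flag of P. If S₁ and S₂ are two flag simplices of P associated with the same flag F, then there exists a flag simplex S of P associated with F such that S ⊂ S₁ ∩ S₂. -/

import Mathlib

open Set MeasureTheory Filter
open scoped Topology RealInnerProductSpace symmDiff

noncomputable section

abbrev Euc (d : ℕ) : Type := EuclideanSpace ℝ (Fin d)

variable {d : ℕ}

/-- `P` is a polytope: the convex hull of finitely many points, with nonempty interior. -/
def IsPolytope (P : Set (Euc d)) : Prop :=
  ∃ V : Set (Euc d), V.Finite ∧ P = convexHull ℝ V ∧ (interior P).Nonempty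

/-- `F` is a face of `P`: the intersection of `P` with a supporting hyperplane. -/
def IsFace (P F : Set (Euc d)) : Prop :=
  ∃ (f : Euc d →L[ℝ] ℝ) (c : ℝ), f ≠ 0 ∧ (∀ x ∈ P, f x ≤ c) ∧ (∃ x ∈ P, f x = c) ∧
    F = {x ∈ P | f x = c}

/-- `F` is an `i`-face of `P`: a face spanning an `i`-dimensional affine subspace. -/
def IsFaceOfDim (P : Set (Euc d)) (i : ℕ) (F : Set (Euc d)) : Prop :=
  IsFace P F ∧ Module.finrank ℝ (vectorSpan ℝ F) = i

/-- A complete flag of `P`: an increasing sequence `F 0 ⊆ … ⊆ F (n-1)` with `F i` an `i`-face. -/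
def IsCompleteFlag (n : ℕ) (P : Set (Euc d)) (F : Fin n → Set (Euc d)) : Prop :=
  (∀ i : Fin n, IsFaceOfDim P (i : ℕ) (F i)) ∧ ∀ i j : Fin n, i ≤ j → F i ⊆ F j

/-- `v` is a vertex of `P`, i.e. `{v}` is a (0-dimensional) face of `P`. -/
def IsVertex (P : Set (Euc d)) (v : Euc d) : Prop := IsFace P {v}

/-- The set of complete flags of `P`. -/
def flags (n : ℕ) (P : Set (Euc d)) : Set (Fin n → Set (Euc d)) :=
  {F | IsCompleteFlag n P F}

/-- The set of complete flags of `P` whose `0`-face is the vertex `{v}`. -/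
def flagsAt (n : ℕ) (P : Set (Euc d)) (v : Euc d) : Set (Fin n → Set (Euc d)) :=
  {F | IsCompleteFlag n P F ∧ ∀ i : Fin n, v ∈ F i}

/-- `S` is an `n`-simplex: the convex hull of `n+1` affinely independent points. -/
def IsSimplex (n : ℕ) (S : Set (Euc d)) : Prop :=
  ∃ v : Fin (n + 1) → Euc d, AffineIndependent ℝ v ∧ S = convexHull ℝ (Set.range v)

/-- `S` is a flag simplex of `P` associated with the complete flag `F`: an `n`-simplex whose
vertices can be labelled so that `v i ∈ relint (F i)` for `i < n` and `v n ∈ int P`. -/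
def IsFlagSimplexAssoc (n : ℕ) (P : Set (Euc d)) (F : Fin n → Set (Euc d))
    (S : Set (Euc d)) : Prop :=
  ∃ v : Fin (n + 1) → Euc d, AffineIndependent ℝ v ∧ S = convexHull ℝ (Set.range v) ∧
    (∀ i : Fin n, v i.castSucc ∈ intrinsicInterior ℝ (F i)) ∧
    v (Fin.last n) ∈ interior P

/-- `S` is a flag simplex of `P`. -/
def IsFlagSimplex (n : ℕ) (P S : Set (Euc d)) : Prop :=
  ∃ F : Fin n → Set (Euc d), IsCompleteFlag n P F ∧ IsFlagSimplexAssoc n P F S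

/-- The weighted floating body `P_δ^φ`: the intersection of all closed half-spaces `H⁻`
whose complementary half-space `H⁺` cuts off weighted volume at most `δ` from `P`. -/
def weightedFloatingBody (P : Set (Euc d)) (φ : Euc d → ℝ) (δ : ℝ) : Set (Euc d) :=
  ⋂₀ {H | ∃ (f : Euc d →L[ℝ] ℝ) (c : ℝ), f ≠ 0 ∧ H = {x | f x ≤ c} ∧
      (∫ x in P ∩ {x | c ≤ f x}, φ x) ≤ δ}

/-- The convex floating body `P_δ`. -/
def floatingBody (P : Set (Euc d)) (δ : ℝ) : Set (Euc d) :=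
  ⋂₀ {H | ∃ (f : Euc d →L[ℝ] ℝ) (c : ℝ), f ≠ 0 ∧ H = {x | f x ≤ c} ∧
      (volume (P ∩ {x | c ≤ f x})).toReal ≤ δ}

/-- `A⁺(T, z i, δ)`: the union of all sets `T ∩ int H⁺` over closed half-spaces `H⁺` with
`λ_n(T ∩ H⁺) ≤ δ`, `z i ∈ int H⁺` and `z j ∉ H⁺` for `j ≠ i`. -/
def Aplus (n : ℕ) (T : Set (Euc d)) (z : Fin (n + 1) → Euc d) (i : Fin (n + 1))
    (δ : ℝ) : Set (Euc d) :=
  ⋃₀ {A | ∃ (f : Euc d →L[ℝ] ℝ) (c : ℝ), f ≠ 0 ∧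
      A = T ∩ interior {x | c ≤ f x} ∧
      (volume (T ∩ {x | c ≤ f x})).toReal ≤ δ ∧
      z i ∈ interior {x | c ≤ f x} ∧
      ∀ j : Fin (n + 1), j ≠ i → z j ∉ {x | c ≤ f x}}

/-! Let `G` be the flag `F` with `P` appended on top, and `v`, `w` the vertices of `S₁`, `S₂`.
Since `G 0` is a point, `v 0 = w 0`; for each `m`, both `v 0, …, v m` and `w 0, …, w m` affinely
span the affine hull of `G m`, and `v (m+1)`, `w (m+1)` lie strictly on the side of the supporting
hyperplane of `G m` where `P` lies. Hence the barycentric coordinates of `v (m+1)` with respect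
to `w` vanish beyond `m+1` and are positive at `m+1`. Starting from `u 0 = v 0` and moving `u m`
a little towards `v (m+1)` yields `u (m+1)` in the relative interior of `G (m+1)` whose
coordinates with respect to both `v` and `w` are positive up to `m+1` and vanish beyond. Both
coordinate matrices of `u` are then triangular with positive diagonal, so `u` spans a flag simplex
inside `S₁ ∩ S₂`. -/

open AffineMap

section IntrinsicInterior

variable {E : Type*} [NormedAddCommGroup E] [NormedSpace ℝ E]

theorem mem_intrinsicInterior_iff_exists_ball {s : Set E} {x : E} :
    x ∈ intrinsicInterior ℝ s ↔
      x ∈ affineSpan ℝ s ∧ ∃ ε > 0, Metric.ball x ε ∩ affineSpan ℝ s ⊆ s := by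
  constructor
  · rintro ⟨x, hx, rfl⟩
    obtain ⟨ε, hε, hball⟩ := Metric.mem_nhds_iff.1 (mem_interior_iff_mem_nhds.1 hx)
    exact ⟨x.2, ε, hε, fun p ⟨hp, hpA⟩ ↦ hball (show (⟨p, hpA⟩ : affineSpan ℝ s) ∈ _ from hp)⟩
  · rintro ⟨hx, ε, hε, hball⟩
    exact ⟨⟨x, hx⟩, mem_interior_iff_mem_nhds.2 <|
      Metric.mem_nhds_iff.2 ⟨ε, hε, fun p hp ↦ hball ⟨hp, p.2⟩⟩, rfl⟩

theorem intrinsicInterior_eq_interior_of_affineSpan_eq_top {s : Set E}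
    (hs : affineSpan ℝ s = ⊤) : intrinsicInterior ℝ s = interior s := by
  ext x
  simp only [mem_intrinsicInterior_iff_exists_ball, hs, AffineSubspace.top_coe, Set.inter_univ,
    AffineSubspace.mem_top, true_and, mem_interior_iff_mem_nhds, Metric.mem_nhds_iff]

theorem Convex.lineMap_mem_intrinsicInterior {s : Set E} (hs : Convex ℝ s) {x y : E}
    (hx : x ∈ s) (hy : y ∈ intrinsicInterior ℝ s) {t : ℝ} (ht : t ∈ Ioc (0 : ℝ) 1) :
    lineMap x y t ∈ intrinsicInterior ℝ s := by
  obtain ⟨hyA, ε, hε, hball⟩ := mem_intrinsicInterior_iff_exists_ball.1 hy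
  have hxA : x ∈ affineSpan ℝ s := subset_affineSpan ℝ s hx
  refine mem_intrinsicInterior_iff_exists_ball.2
    ⟨AffineMap.lineMap_mem t hxA hyA, t * ε, mul_pos ht.1 hε, ?_⟩
  rintro p ⟨hp, hpA⟩
  -- `p` is the image under `lineMap x · t` of a point `q` of the `ε`-ball around `y`
  have ht0 : t ≠ 0 := ht.1.ne'
  set q := lineMap x p t⁻¹ with hq
  have hpq : p = lineMap x q t := by
    simp only [hq, lineMap_apply_module', smul_add, smul_sub, smul_smul, mul_inv_cancel₀ ht0,
      one_smul]
    abel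
  have hqy : dist q y < ε := by
    have hqy' : q - y = t⁻¹ • (p - lineMap x y t) := by
      simp only [hq, lineMap_apply_module', smul_add, smul_sub, smul_smul, inv_mul_cancel₀ ht0,
        one_smul]
      abel
    rw [dist_eq_norm, hqy', norm_smul, Real.norm_of_nonneg (inv_nonneg.2 ht.1.le),
      inv_mul_lt_iff₀ ht.1, ← dist_eq_norm]
    exact hp
  rw [hpq]
  exact hs.lineMap_mem hx (hball ⟨hqy, AffineMap.lineMap_mem _ hxA hpA⟩) ⟨ht.1.le, ht.2⟩

end IntrinsicInterior

namespace AffineBasis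

variable {E : Type*} [AddCommGroup E] [Module ℝ E]

theorem coord_eq_zero_of_mem_affineSpan_image {ι : Type*} (b : AffineBasis ι ℝ E) {s : Set ι}
    {x : E} (hx : x ∈ affineSpan ℝ (b '' s)) {k : ι} (hk : k ∉ s) : b.coord k x = 0 := by
  refine affineSpan_induction hx ?_ fun c u v w hu hv hw ↦ ?_
  · rintro _ ⟨j, hj, rfl⟩
    exact b.coord_apply_ne (by rintro rfl; exact hk hj)
  · rw [AffineMap.map_vadd, map_smul, AffineMap.linearMap_vsub, hu, hv, hw]
    simp

theorem apply_eq_sum_coord_mul {ι : Type*} [Fintype ι] (b : AffineBasis ι ℝ E)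
    (g : E →ᵃ[ℝ] ℝ) (x : E) : g x = ∑ k, b.coord k x * g (b k) := by
  classical
  conv_lhs => rw [← b.affineCombination_coord_eq_self x]
  rw [Finset.map_affineCombination _ _ _ (b.sum_coord_apply_eq_one x),
    Finset.affineCombination_eq_linear_combination _ _ _ (b.sum_coord_apply_eq_one x)]
  simp [smul_eq_mul]

variable {n : ℕ} (b : AffineBasis (Fin (n + 1)) ℝ E)

/-- The relative interior of the face `conv {b 0, …, b m}` of the simplex spanned by `b`. -/
def openInitialFace (m : Fin (n + 1)) : Set E :=
  {x | ∀ k, (k ≤ m → 0 < b.coord k x) ∧ (m < k → b.coord k x = 0)}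

theorem apply_zero_mem_openInitialFace : b 0 ∈ b.openInitialFace 0 := by
  intro k
  refine ⟨fun hk ↦ ?_, fun hk ↦ b.coord_apply_ne hk.ne'⟩
  rw [Fin.le_zero_iff.1 hk, b.coord_apply_eq]
  exact one_pos

theorem openInitialFace_subset_convexHull (m : Fin (n + 1)) :
    b.openInitialFace m ⊆ convexHull ℝ (range b) := by
  intro x hx
  rw [b.convexHull_eq_nonneg_coord]
  intro k
  rcases le_or_gt k m with hk | hk
  · exact ((hx k).1 hk).le
  · exact ((hx k).2 hk).ge

theorem affineIndependent_of_forall_mem_openInitialFace {u : Fin (n + 1) → E}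
    (hu : ∀ i, u i ∈ b.openInitialFace i) : AffineIndependent ℝ u := by
  have hlower : (b.toMatrix u).IsLowerTriangular := fun i k hik ↦ ((hu i) k).2 hik
  have hdet : IsUnit (b.toMatrix u).det := by
    rw [Matrix.det_of_isLowerTriangular _ hlower]
    exact (Finset.prod_pos fun i _ ↦ ((hu i) i).1 le_rfl).ne'.isUnit
  exact ((b.isUnit_toMatrix_iff u).1 ((Matrix.isUnit_iff_isUnit_det _).2 hdet)).1

theorem coord_succ_pos {m : Fin n} {g : E →ᵃ[ℝ] ℝ} (hg : ∀ k ≤ m.castSucc, g (b k) = 0)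
    (hgb : 0 < g (b m.succ)) {x : E} (hx : ∀ k, m.succ < k → b.coord k x = 0)
    (hgx : 0 < g x) : 0 < b.coord m.succ x := by
  have hsum : g x = b.coord m.succ x * g (b m.succ) := by
    rw [b.apply_eq_sum_coord_mul g x, Finset.sum_eq_single m.succ]
    · intro k _ hk
      rcases lt_or_gt_of_ne hk with hk | hk
      · rw [hg k (Fin.le_castSucc_iff.2 hk), mul_zero]
      · rw [hx k hk, zero_mul]
    · simp
  exact pos_of_mul_pos_left (hsum ▸ hgx) hgb.le

theorem eventually_lineMap_mem_openInitialFace {m : Fin n} {x y : E}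
    (hx : x ∈ b.openInitialFace m.castSucc) (hy : 0 < b.coord m.succ y)
    (hy' : ∀ k, m.succ < k → b.coord k y = 0) :
    ∀ᶠ t in 𝓝[>] (0 : ℝ), lineMap x y t ∈ b.openInitialFace m.succ := by
  have hcoord : ∀ k t, b.coord k (lineMap x y t) = lineMap (b.coord k x) (b.coord k y) t :=
    fun k t ↦ (b.coord k).apply_lineMap x y t
  have hnear : ∀ᶠ t in 𝓝 (0 : ℝ), ∀ k ≤ m.castSucc, 0 < b.coord k (lineMap x y t) := by
    refine eventually_all.2 fun k ↦ ?_
    by_cases hk : k ≤ m.castSucc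
    · have hlim : Tendsto (fun t : ℝ ↦ b.coord k (lineMap x y t)) (𝓝 0) (𝓝 (b.coord k x)) := by
        simpa [hcoord] using
          (AffineMap.lineMap_continuous (p := b.coord k x) (q := b.coord k y)).tendsto (0 : ℝ)
      exact (hlim.eventually (eventually_gt_nhds ((hx k).1 hk))).mono fun _ h _ ↦ h
    · exact Eventually.of_forall fun _ h ↦ absurd h hk
  filter_upwards [self_mem_nhdsWithin, nhdsWithin_le_nhds hnear] with t (ht : 0 < t) hpos k
  refine ⟨fun hk ↦ ?_, fun hk ↦ ?_⟩
  · rcases hk.lt_or_eq with hk | rfl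
    · exact hpos k (Fin.le_castSucc_iff.2 hk)
    · rw [hcoord, (hx _).2 Fin.castSucc_lt_succ, lineMap_apply_ring]
      simpa using mul_pos ht hy
  · rw [hcoord, (hx k).2 (Fin.castSucc_lt_succ.trans hk), hy' k hk]
    simp

end AffineBasis

section ExposedFlag

variable {E : Type*} [NormedAddCommGroup E] [NormedSpace ℝ E] [FiniteDimensional ℝ E] {n : ℕ}

/-- The model case is a complete flag of a polytope with the polytope itself appended on top. -/
structure IsExposedFlag (G : Fin (n + 1) → Set E) : Prop where
  monotone : Monotone G
  convex : ∀ i, Convex ℝ (G i)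
  finrank_vectorSpan : ∀ i, Module.finrank ℝ (vectorSpan ℝ (G i)) = i
  exposed : ∀ m : Fin n, ∃ g : E →ᵃ[ℝ] ℝ,
    (∀ x ∈ G m.castSucc, g x = 0) ∧ ∀ x ∈ G m.succ, x ∉ G m.castSucc → 0 < g x

namespace IsExposedFlag

variable {G : Fin (n + 1) → Set E} {v : Fin (n + 1) → E}

theorem subsingleton_zero (hG : IsExposedFlag G) : (G 0).Subsingleton := by
  rw [← vectorSpan_eq_bot_iff_subsingleton (k := ℝ), ← Submodule.finrank_eq_zero,
    hG.finrank_vectorSpan]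
  rfl

theorem affineSpan_image_Iic (hG : IsExposedFlag G) (hv : AffineIndependent ℝ v)
    (hvG : ∀ i, v i ∈ G i) (i : Fin (n + 1)) :
    affineSpan ℝ (v '' Iic i) = affineSpan ℝ (G i) := by
  classical
  have hle : affineSpan ℝ ((Finset.Iic i).image v : Set E) ≤ affineSpan ℝ (G i) := by
    rw [affineSpan_le, Finset.coe_image, Finset.coe_Iic]
    rintro _ ⟨j, hj, rfl⟩
    exact subset_affineSpan ℝ _ (hG.monotone hj (hvG j))
  have hcard : (Finset.Iic i).card = Module.finrank ℝ (affineSpan ℝ (G i)).direction + 1 := by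
    rw [Fin.card_Iic, direction_affineSpan, hG.finrank_vectorSpan]
  simpa using hv.affineSpan_image_finset_eq_of_le_of_card_eq_finrank_add_one hle hcard

theorem apply_succ_notMem (hG : IsExposedFlag G) (hv : AffineIndependent ℝ v)
    (hvG : ∀ i, v i ∈ G i) (m : Fin n) : v m.succ ∉ G m.castSucc := by
  intro h
  have h' : v m.succ ∈ affineSpan ℝ (G m.castSucc) := subset_affineSpan ℝ _ h
  rw [← hG.affineSpan_image_Iic hv hvG, hv.mem_affineSpan_iff] at h'
  exact Fin.castSucc_lt_succ.not_ge h'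

theorem coord_eq_zero_of_mem (hG : IsExposedFlag G) (b : AffineBasis (Fin (n + 1)) ℝ E)
    (hb : ∀ i, b i ∈ G i) {i k : Fin (n + 1)} (hik : i < k) {y : E} (hy : y ∈ G i) :
    b.coord k y = 0 := by
  have hspan : y ∈ affineSpan ℝ (G i) := subset_affineSpan ℝ _ hy
  rw [← hG.affineSpan_image_Iic b.ind hb] at hspan
  exact b.coord_eq_zero_of_mem_affineSpan_image hspan (not_le.2 hik)

theorem coord_succ_pos (hG : IsExposedFlag G) (b : AffineBasis (Fin (n + 1)) ℝ E)
    (hb : ∀ i, b i ∈ G i) {m : Fin n} {y : E} (hy : y ∈ G m.succ) (hy' : y ∉ G m.castSucc) :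
    0 < b.coord m.succ y := by
  obtain ⟨g, hg0, hgpos⟩ := hG.exposed m
  exact b.coord_succ_pos (fun k hk ↦ hg0 _ (hG.monotone hk (hb k)))
    (hgpos _ (hb _) (hG.apply_succ_notMem b.ind hb m))
    (fun k hk ↦ hG.coord_eq_zero_of_mem b hb hk hy) (hgpos y hy hy')

theorem exists_mem_openInitialFace (hG : IsExposedFlag G)
    (bv bw : AffineBasis (Fin (n + 1)) ℝ E)
    (hbv : ∀ i, bv i ∈ intrinsicInterior ℝ (G i)) (hbw : ∀ i, bw i ∈ G i) (i : Fin (n + 1)) :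
    ∃ x ∈ intrinsicInterior ℝ (G i), x ∈ bv.openInitialFace i ∧ x ∈ bw.openInitialFace i := by
  have hbvG : ∀ i, bv i ∈ G i := fun i ↦ intrinsicInterior_subset (hbv i)
  induction i using Fin.induction with
  | zero =>
    refine ⟨bv 0, hbv 0, bv.apply_zero_mem_openInitialFace, ?_⟩
    rw [hG.subsingleton_zero (hbvG 0) (hbw 0)]
    exact bw.apply_zero_mem_openInitialFace
  | succ m ih =>
    obtain ⟨x, hxG, hxv, hxw⟩ := ih
    have hv : ∀ᶠ t in 𝓝[>] (0 : ℝ), lineMap x (bv m.succ) t ∈ bv.openInitialFace m.succ :=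
      bv.eventually_lineMap_mem_openInitialFace hxv (by simp)
        fun k hk ↦ bv.coord_apply_ne hk.ne'
    have hw : ∀ᶠ t in 𝓝[>] (0 : ℝ), lineMap x (bv m.succ) t ∈ bw.openInitialFace m.succ :=
      bw.eventually_lineMap_mem_openInitialFace hxw
        (hG.coord_succ_pos bw hbw (hbvG m.succ) (hG.apply_succ_notMem bv.ind hbvG m))
        fun k hk ↦ hG.coord_eq_zero_of_mem bw hbw hk (hbvG m.succ)
    obtain ⟨t, ht, htv, htw⟩ :=
      ((eventually_mem_set.2 (Ioc_mem_nhdsGT zero_lt_one)).and (hv.and hw)).exists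
    refine ⟨lineMap x (bv m.succ) t, ?_, htv, htw⟩
    exact (hG.convex _).lineMap_mem_intrinsicInterior
      (hG.monotone Fin.castSucc_lt_succ.le (intrinsicInterior_subset hxG)) (hbv _) ht

theorem exists_common_refinement (hG : IsExposedFlag G) (hE : Module.finrank ℝ E = n)
    {w : Fin (n + 1) → E} (hv : AffineIndependent ℝ v) (hw : AffineIndependent ℝ w)
    (hvG : ∀ i, v i ∈ intrinsicInterior ℝ (G i)) (hwG : ∀ i, w i ∈ G i) :
    ∃ u : Fin (n + 1) → E, AffineIndependent ℝ u ∧ (∀ i, u i ∈ intrinsicInterior ℝ (G i)) ∧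
      range u ⊆ convexHull ℝ (range v) ∩ convexHull ℝ (range w) := by
  have hcard : Fintype.card (Fin (n + 1)) = Module.finrank ℝ E + 1 := by simp [hE]
  let bv : AffineBasis (Fin (n + 1)) ℝ E :=
    ⟨v, hv, hv.affineSpan_eq_top_iff_card_eq_finrank_add_one.2 hcard⟩
  let bw : AffineBasis (Fin (n + 1)) ℝ E :=
    ⟨w, hw, hw.affineSpan_eq_top_iff_card_eq_finrank_add_one.2 hcard⟩
  choose u huG hu using hG.exists_mem_openInitialFace bv bw hvG hwG
  refine ⟨u, bv.affineIndependent_of_forall_mem_openInitialFace fun i ↦ (hu i).1, huG, ?_⟩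
  rintro _ ⟨i, rfl⟩
  exact ⟨bv.openInitialFace_subset_convexHull i (hu i).1,
    bw.openInitialFace_subset_convexHull i (hu i).2⟩

end IsExposedFlag

end ExposedFlag

theorem IsFace.subset {P F : Set (Euc d)} (hF : IsFace P F) : F ⊆ P := by
  obtain ⟨f, c, -, -, -, rfl⟩ := hF
  exact sep_subset _ _

theorem IsFace.convex {P F : Set (Euc d)} (hP : Convex ℝ P) (hF : IsFace P F) : Convex ℝ F := by
  obtain ⟨f, c, -, -, -, rfl⟩ := hF
  exact hP.inter (convex_hyperplane f.isLinear c)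

theorem IsFace.exists_affineMap {P F : Set (Euc d)} (hF : IsFace P F) :
    ∃ g : Euc d →ᵃ[ℝ] ℝ, (∀ x ∈ F, g x = 0) ∧ ∀ x ∈ P, x ∉ F → 0 < g x := by
  obtain ⟨f, c, -, hle, -, rfl⟩ := hF
  refine ⟨AffineMap.const ℝ (Euc d) c - (f : Euc d →ₗ[ℝ] ℝ).toAffineMap, ?_, ?_⟩
  · rintro x ⟨-, hx⟩
    simp [hx]
  · intro x hx hxF
    have hlt : f x < c := (hle x hx).lt_of_ne fun h ↦ hxF ⟨hx, h⟩
    simpa using hlt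

theorem IsPolytope.convex {P : Set (Euc d)} (hP : IsPolytope P) : Convex ℝ P := by
  obtain ⟨V, -, rfl, -⟩ := hP
  exact convex_convexHull ℝ V

theorem IsPolytope.affineSpan_eq_top {P : Set (Euc d)} (hP : IsPolytope P) :
    affineSpan ℝ P = ⊤ := by
  obtain ⟨V, -, rfl, hint⟩ := hP
  exact (convex_convexHull ℝ V).interior_nonempty_iff_affineSpan_eq_top.1 hint

theorem IsCompleteFlag.monotone_snoc {n : ℕ} {P : Set (Euc d)} {F : Fin n → Set (Euc d)}
    (hF : IsCompleteFlag n P F) : Monotone (Fin.snoc F P : Fin (n + 1) → Set (Euc d)) := by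
  intro i j hij
  induction j using Fin.lastCases with
  | last =>
    induction i using Fin.lastCases with
    | last => simp
    | cast i => simpa using (hF.1 i).1.subset
  | cast j =>
    induction i using Fin.lastCases with
    | last => exact absurd hij (Fin.castSucc_lt_last j).not_ge
    | cast i => simpa using hF.2 i j (Fin.castSucc_le_castSucc_iff.1 hij)

theorem IsCompleteFlag.isExposedFlag_snoc {n : ℕ} {P : Set (Euc n)} {F : Fin n → Set (Euc n)}
    (hP : IsPolytope P) (hF : IsCompleteFlag n P F) :
    IsExposedFlag (Fin.snoc F P : Fin (n + 1) → Set (Euc n)) where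
  monotone := hF.monotone_snoc
  convex i := by
    induction i using Fin.lastCases with
    | last => simpa using hP.convex
    | cast i => simpa using (hF.1 i).1.convex hP.convex
  finrank_vectorSpan i := by
    induction i using Fin.lastCases with
    | last =>
      rw [Fin.snoc_last, ← direction_affineSpan, hP.affineSpan_eq_top,
        AffineSubspace.direction_top, finrank_top, finrank_euclideanSpace_fin, Fin.val_last]
    | cast i => rw [Fin.snoc_castSucc, (hF.1 i).2, Fin.val_castSucc]
  exposed m := by
    obtain ⟨g, hg0, hgpos⟩ := (hF.1 m).1.exists_affineMap
    refine ⟨g, by simpa using hg0, fun x hx hxF ↦ hgpos x ?_ (by simpa using hxF)⟩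
    simpa using hF.monotone_snoc (Fin.le_last m.succ) hx

theorem IsPolytope.isFlagSimplexAssoc_iff {n : ℕ} {P : Set (Euc d)} {F : Fin n → Set (Euc d)}
    {S : Set (Euc d)} (hP : IsPolytope P) :
    IsFlagSimplexAssoc n P F S ↔ ∃ v : Fin (n + 1) → Euc d, AffineIndependent ℝ v ∧
      S = convexHull ℝ (range v) ∧
        ∀ i, v i ∈ intrinsicInterior ℝ ((Fin.snoc F P : Fin (n + 1) → Set (Euc d)) i) := by
  simp only [IsFlagSimplexAssoc, Fin.forall_fin_succ', Fin.snoc_castSucc, Fin.snoc_last,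
    intrinsicInterior_eq_interior_of_affineSpan_eq_top hP.affineSpan_eq_top]

/-- **Proposition (i).** If `S₁` and `S₂` are flag simplices of an `n`-polytope `P`
associated with the same complete flag `F`, then there exists a flag simplex `S` of `P`
associated with `F` such that `S ⊆ S₁ ∩ S₂`. -/
theorem flag_simplices_common_refinement (n : ℕ) (P : Set (Euc n)) (hP : IsPolytope P)
    (F : Fin n → Set (Euc n)) (hF : IsCompleteFlag n P F)
    (S₁ S₂ : Set (Euc n))
    (h₁ : IsFlagSimplexAssoc n P F S₁) (h₂ : IsFlagSimplexAssoc n P F S₂) :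
    ∃ S : Set (Euc n), IsFlagSimplexAssoc n P F S ∧ S ⊆ S₁ ∩ S₂ := by
  obtain ⟨v, hv, rfl, hvG⟩ := hP.isFlagSimplexAssoc_iff.1 h₁
  obtain ⟨w, hw, rfl, hwG⟩ := hP.isFlagSimplexAssoc_iff.1 h₂
  obtain ⟨u, hu, huG, hsub⟩ := (hF.isExposedFlag_snoc hP).exists_common_refinement
    finrank_euclideanSpace_fin hv hw hvG fun i ↦ intrinsicInterior_subset (hwG i)
  refine ⟨convexHull ℝ (range u), hP.isFlagSimplexAssoc_iff.2 ⟨u, hu, rfl, huG⟩, ?_⟩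
  exact convexHull_min hsub ((convex_convexHull ℝ _).inter (convex_convexHull ℝ _))

end
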